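/- arXiv:2004.05721 — 3 statements merged into one kernel-verified Lean document; each statement's English description precedes it below -/
import Mathlib

section
/- There is an absolute constant C > 0 with the following property. For every weighted directed graph G = (V,E,W) with n ≥ 2 vertices, every source vertex set S ⊆ V of size s ≥ 2, every integer k > 1, and every real R > 0, there exists an S-sourcewise (C·k·log n, R)-cover of G in which every vertex of V is contained in at most C·s^{1/k}·log n balls. -/
open scoped ENNReal

noncomputable section

/-- The cost (total weight) of a walk, given as a list of consecutively visited
vertices, where weights are coerced into `ℝ≥0∞`. -/
def walkCost {V : Type*} (W : V × V → ℝ) : List V → ℝ≥0∞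
  | [] => 0
  | [_] => 0
  | a :: b :: l => ENNReal.ofReal (W (a, b)) + walkCost W (b :: l)

/-- `l` is (the list of vertices of) a directed walk from `u` to `v` in the
digraph with edge set `E`. -/
def IsWalk {V : Type*} (E : Set (V × V)) (u v : V) (l : List V) : Prop :=
  l.Chain' (fun a b => (a, b) ∈ E) ∧ l.head? = some u ∧ l.getLast? = some v

/-- The shortest-path distance from `u` to `v` in the digraph with edge set `E`
and weight function `W` (equal to `∞` if there is no directed path). -/
def gdist {V : Type*} (E : Set (V × V)) (W : V × V → ℝ) (u v : V) : ℝ≥0∞ :=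
  ⨅ (l : List V) (_ : IsWalk E u v l), walkCost W l

/-- The round-trip distance between `u` and `v`. -/
def rtdist {V : Type*} (E : Set (V × V)) (W : V × V → ℝ) (u v : V) : ℝ≥0∞ :=
  gdist E W u v + gdist E W v u

/-- The round-trip distance between `u` and `v` in the subgraph induced by the
vertex set `B`. -/
def inducedRtdist {V : Type*} (E : Set (V × V)) (W : V × V → ℝ) (B : Set V)
    (u v : V) : ℝ≥0∞ :=
  rtdist (E ∩ B ×ˢ B) W u v



/-!
Round-trip distance is symmetric and satisfies the triangle inequality, so balls of the induced
subgraph `G[H]` behave like metric balls. Put `σ = s^(1/k)` and `r = 2R`. A phase repeatedly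
picks a remaining source `u`; since there are at most `σ^k` sources, some level `m < k` has at
most `σ` times as many sources within `(2m+3)r` of `u` as within `(2m+1)r`. The ball of radius
`(2m+2)r` around `u` serves every source within `(2m+1)r`, the sources of the shell up to
`(2m+3)r` are deferred to a later phase, and the ball is deleted from `H`. A source beyond
`(2m+3)r` has no round trip of length `< r` through the deleted ball, so its short round trips
survive in the smaller graph. Balls of one phase are disjoint and each phase defers at most a
`1 - 1/σ` fraction of its sources, so a vertex lies in at most `σ log s + 1` balls.
-/

namespace RoundTripCover

variable {V : Type*} {E : Set (V × V)} {W : V × V → ℝ} {u v w x y : V} {l l₁ l₂ : List V}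

lemma isWalk_singleton_iff {a : V} : IsWalk E u v [a] ↔ a = u ∧ a = v :=
  ⟨fun h => ⟨by simpa using h.2.1, by simpa using h.2.2⟩,
    by rintro ⟨rfl, rfl⟩; exact ⟨List.isChain_singleton _, rfl, rfl⟩⟩

lemma isWalk_cons_cons_iff {a b : V} :
    IsWalk E u v (a :: b :: l) ↔ a = u ∧ (a, b) ∈ E ∧ IsWalk E b v (b :: l) := by
  constructor
  · rintro ⟨hc, hh, hl⟩
    obtain ⟨hab, hc⟩ := List.isChain_cons_cons.1 hc
    exact ⟨by simpa using hh, hab, hc, rfl, by simpa using hl⟩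
  · rintro ⟨rfl, hab, hc, -, hl⟩
    exact ⟨List.isChain_cons_cons.2 ⟨hab, hc⟩, rfl, by rwa [List.getLast?_cons_cons]⟩

lemma IsWalk.forall_mem {s : Set V} (hl : IsWalk E u v l) (hE : E ⊆ s ×ˢ s) (hu : u ∈ s) :
    ∀ x ∈ l, x ∈ s :=
  hl.1.induction (· ∈ s) l (fun _ _ hab _ => (hE hab).2) fun hne => by
    simpa [List.head_eq_iff_head?_eq_some hne |>.2 hl.2.1] using hu

lemma IsWalk.inter_prod {s : Set V} (hl : IsWalk E u v l) (hs : ∀ x ∈ l, x ∈ s) :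
    IsWalk (E ∩ s ×ˢ s) u v l :=
  ⟨(List.IsChain.iff_mem.1 hl.1).imp fun _ _ ⟨ha, hb, hab⟩ => ⟨hab, hs _ ha, hs _ hb⟩, hl.2⟩

lemma gdist_le_walkCost (hl : IsWalk E u v l) : gdist E W u v ≤ walkCost W l :=
  iInf₂_le l hl

lemma exists_isWalk_of_gdist_lt {c : ℝ≥0∞} (h : gdist E W u v < c) :
    ∃ l, IsWalk E u v l ∧ walkCost W l < c := by
  simpa [gdist, iInf_lt_iff] using h

lemma gdist_self (u : V) : gdist E W u u = 0 :=
  nonpos_iff_eq_zero.1 <| gdist_le_walkCost (l := [u]) (isWalk_singleton_iff.2 ⟨rfl, rfl⟩)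

lemma gdist_le_ofReal_add {a b : V} (hab : (a, b) ∈ E) (v : V) :
    gdist E W a v ≤ ENNReal.ofReal (W (a, b)) + gdist E W b v := by
  simp only [gdist, ENNReal.add_iInf]
  refine le_iInf₂ fun l hl => ?_
  obtain ⟨t, rfl⟩ : ∃ t, l = b :: t := by
    rcases l with _ | ⟨c, t⟩
    · simp [IsWalk] at hl
    · exact ⟨t, by simpa [IsWalk] using hl.2.1⟩
  exact iInf₂_le (a :: b :: t) (isWalk_cons_cons_iff.2 ⟨rfl, hab, hl⟩)

lemma gdist_le_walkCost_add (hl : IsWalk E u v l) (w : V) :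
    gdist E W u w ≤ walkCost W l + gdist E W v w := by
  induction l generalizing u with
  | nil => simp [IsWalk] at hl
  | cons a t ih =>
    rcases t with _ | ⟨b, t⟩
    · obtain ⟨rfl, rfl⟩ := isWalk_singleton_iff.1 hl
      simp [walkCost]
    · obtain ⟨rfl, hab, hl⟩ := isWalk_cons_cons_iff.1 hl
      calc gdist E W a w ≤ ENNReal.ofReal (W (a, b)) + gdist E W b w := gdist_le_ofReal_add hab w
        _ ≤ ENNReal.ofReal (W (a, b)) + (walkCost W (b :: t) + gdist E W v w) := by
          gcongr; exact ih hl
        _ = walkCost W (a :: b :: t) + gdist E W v w := by rw [walkCost, add_assoc]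

lemma gdist_triangle (u v w : V) : gdist E W u w ≤ gdist E W u v + gdist E W v w := by
  conv_rhs => rw [gdist, ENNReal.iInf_add]; enter [1, l]; rw [ENNReal.iInf_add]
  exact le_iInf₂ fun l hl => gdist_le_walkCost_add hl w

lemma gdist_add_gdist_le_walkCost (hl : IsWalk E u v l) (hx : x ∈ l) :
    gdist E W u x + gdist E W x v ≤ walkCost W l := by
  induction l generalizing u with
  | nil => simp at hx
  | cons a t ih =>
    rcases List.mem_cons.1 hx with rfl | hx
    · obtain rfl : x = u := by simpa [IsWalk] using hl.2.1
      simpa [gdist_self] using gdist_le_walkCost hl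
    rcases t with _ | ⟨b, t⟩
    · simp at hx
    · obtain ⟨rfl, hab, hl⟩ := isWalk_cons_cons_iff.1 hl
      calc gdist E W a x + gdist E W x v
          ≤ ENNReal.ofReal (W (a, b)) + gdist E W b x + gdist E W x v := by
            gcongr; exact gdist_le_ofReal_add hab x
        _ ≤ ENNReal.ofReal (W (a, b)) + walkCost W (b :: t) := by
            rw [add_assoc]; gcongr; exact ih hl hx
        _ = walkCost W (a :: b :: t) := rfl

lemma rtdist_self (u : V) : rtdist E W u u = 0 := by
  simp [rtdist, gdist_self]

lemma rtdist_comm (u v : V) : rtdist E W u v = rtdist E W v u :=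
  add_comm _ _

lemma rtdist_triangle (u v w : V) : rtdist E W u w ≤ rtdist E W u v + rtdist E W v w :=
  calc rtdist E W u w ≤ gdist E W u v + gdist E W v w + (gdist E W w v + gdist E W v u) :=
        add_le_add (gdist_triangle u v w) (gdist_triangle w v u)
    _ = rtdist E W u v + rtdist E W v w := by simp only [rtdist]; ring

lemma exists_isWalk_isWalk_of_rtdist_lt {c : ℝ≥0∞} (h : rtdist E W u v < c) :
    ∃ l₁ l₂, IsWalk E u v l₁ ∧ IsWalk E v u l₂ ∧ walkCost W l₁ + walkCost W l₂ < c := by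
  simp only [rtdist, gdist, ENNReal.iInf_add, ENNReal.add_iInf, iInf_lt_iff, exists_prop] at h
  obtain ⟨l₂, hl₂, l₁, hl₁, hc⟩ := h
  exact ⟨l₁, l₂, hl₁, hl₂, hc⟩

lemma rtdist_le_walkCost_add_walkCost (hl₁ : IsWalk E u v l₁) (hl₂ : IsWalk E v u l₂)
    (hx : x ∈ l₁ ++ l₂) : rtdist E W u x ≤ walkCost W l₁ + walkCost W l₂ := by
  rcases List.mem_append.1 hx with hx | hx
  · calc rtdist E W u x = gdist E W u x + gdist E W x u := rfl
      _ ≤ gdist E W u x + (gdist E W x v + walkCost W l₂) := by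
          gcongr
          exact (gdist_triangle x v u).trans (by gcongr; exact gdist_le_walkCost hl₂)
      _ = gdist E W u x + gdist E W x v + walkCost W l₂ := (add_assoc _ _ _).symm
      _ ≤ walkCost W l₁ + walkCost W l₂ := by gcongr; exact gdist_add_gdist_le_walkCost hl₁ hx
  · calc rtdist E W u x = gdist E W u x + gdist E W x u := rfl
      _ ≤ walkCost W l₁ + gdist E W v x + gdist E W x u := by
          gcongr; exact gdist_le_walkCost_add hl₁ x
      _ = walkCost W l₁ + (gdist E W v x + gdist E W x u) := add_assoc _ _ _
      _ ≤ walkCost W l₁ + walkCost W l₂ := by gcongr; exact gdist_add_gdist_le_walkCost hl₂ hx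

lemma rtdist_inter_prod_lt {s : Set V} {c : ℝ≥0∞} (h : rtdist E W u v < c)
    (hs : ∀ x, rtdist E W u x < c → x ∈ s) : rtdist (E ∩ s ×ˢ s) W u v < c := by
  obtain ⟨l₁, l₂, hl₁, hl₂, hc⟩ := exists_isWalk_isWalk_of_rtdist_lt h
  have hmem : ∀ x ∈ l₁ ++ l₂, x ∈ s := fun x hx =>
    hs x ((rtdist_le_walkCost_add_walkCost hl₁ hl₂ hx).trans_lt hc)
  calc rtdist (E ∩ s ×ˢ s) W u v ≤ walkCost W l₁ + walkCost W l₂ :=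
        add_le_add (gdist_le_walkCost (IsWalk.inter_prod hl₁ fun x hx => hmem x (by simp [hx])))
          (gdist_le_walkCost (IsWalk.inter_prod hl₂ fun x hx => hmem x (by simp [hx])))
    _ < c := hc

lemma inducedRtdist_inter_lt {H s : Set V} {c : ℝ≥0∞} (h : inducedRtdist E W H u v < c)
    (hs : ∀ x, inducedRtdist E W H u x < c → x ∈ s) : inducedRtdist E W (H ∩ s) u v < c := by
  have := rtdist_inter_prod_lt h hs
  rwa [Set.inter_assoc, Set.prod_inter_prod] at this

lemma mem_of_inducedRtdist_ne_top {H : Set V} (hu : u ∈ H) (h : inducedRtdist E W H u v ≠ ⊤) :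
    v ∈ H := by
  obtain ⟨l, hl, -⟩ := exists_isWalk_of_gdist_lt (le_self_add.trans_lt h.lt_top)
  exact IsWalk.forall_mem hl Set.inter_subset_right hu v (List.mem_of_mem_getLast? hl.2.2)

open Classical in
def rtBall (E : Set (V × V)) (W : V × V → ℝ) (H : Finset V) (u : V) (c : ℝ≥0∞) : Finset V :=
  {x ∈ H | inducedRtdist E W H u x < c}

section Balls

variable {H : Finset V} {a c d : ℝ≥0∞}

lemma mem_rtBall : x ∈ rtBall E W H u c ↔ x ∈ H ∧ inducedRtdist E W H u x < c := by
  simp [rtBall]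

lemma rtBall_subset : rtBall E W H u c ⊆ H :=
  Finset.filter_subset _ _

lemma rtBall_mono (h : c ≤ d) : rtBall E W H u c ⊆ rtBall E W H u d :=
  fun _ hx => mem_rtBall.2 ⟨(mem_rtBall.1 hx).1, (mem_rtBall.1 hx).2.trans_le h⟩

lemma mem_rtBall_of_lt (hu : u ∈ H) (h : inducedRtdist E W H u x < c) : x ∈ rtBall E W H u c :=
  mem_rtBall.2 ⟨mem_of_inducedRtdist_ne_top hu h.ne_top, h⟩

lemma self_mem_rtBall (hu : u ∈ H) (hc : c ≠ 0) : u ∈ rtBall E W H u c :=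
  mem_rtBall_of_lt hu <| by rw [inducedRtdist, rtdist_self]; exact pos_iff_ne_zero.2 hc

lemma mem_rtBall_add (hw : w ∈ H) (huw : inducedRtdist E W H u w < a)
    (hwv : inducedRtdist E W H w v < c) : v ∈ rtBall E W H u (a + c) :=
  mem_rtBall.2 ⟨mem_of_inducedRtdist_ne_top hw hwv.ne_top,
    (rtdist_triangle u w v).trans_lt (ENNReal.add_lt_add huw hwv)⟩

lemma inducedRtdist_rtBall_lt (hu : u ∈ H) (hy : y ∈ rtBall E W H u c) :
    inducedRtdist E W (rtBall E W H u c) u y < c := by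
  have := inducedRtdist_inter_lt (s := ↑(rtBall E W H u c)) (mem_rtBall.1 hy).2
    fun x hx => mem_rtBall_of_lt hu hx
  rwa [Set.inter_eq_right.2 (Finset.coe_subset.2 rtBall_subset)] at this

end Balls

def ShortRoundTripsStayIn (E : Set (V × V)) (W : V × V → ℝ) (H T : Finset V) (r : ℝ≥0∞) :
    Prop :=
  ∀ w ∈ T, ∀ v, rtdist E W w v < r → inducedRtdist E W H w v < r

def BallsHaveRadiusLE (E : Set (V × V)) (W : V × V → ℝ) (𝒞 : Finset (Finset V)) (ρ : ℝ≥0∞) :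
    Prop :=
  ∀ B ∈ 𝒞, ∃ x ∈ B, ∀ y ∈ B, inducedRtdist E W B x y ≤ ρ

def CoversFrom (E : Set (V × V)) (W : V × V → ℝ) (𝒞 : Finset (Finset V)) (T : Finset V)
    (r : ℝ≥0∞) : Prop :=
  ∀ w ∈ T, ∀ v, rtdist E W w v < r → ∃ B ∈ 𝒞, w ∈ B ∧ v ∈ B

section Covers

variable {𝒞 𝒞₁ 𝒞₂ : Finset (Finset V)} {H T T₁ T₂ : Finset V} {a c d r ρ : ℝ≥0∞}

lemma shortRoundTripsStayIn_univ [Fintype V] : ShortRoundTripsStayIn E W Finset.univ T r := by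
  intro w _ v hv
  simpa [inducedRtdist] using hv

lemma CoversFrom.mono (h : CoversFrom E W 𝒞 T r) (hT : T₁ ⊆ T) : CoversFrom E W 𝒞 T₁ r :=
  fun w hw => h w (hT hw)

lemma ballsHaveRadiusLE_rtBall (hu : u ∈ H) (hc₀ : c ≠ 0) (hc : c ≤ ρ) :
    BallsHaveRadiusLE E W {rtBall E W H u c} ρ := by
  simp only [BallsHaveRadiusLE, Finset.mem_singleton, forall_eq]
  exact ⟨u, self_mem_rtBall hu hc₀, fun y hy => (inducedRtdist_rtBall_lt hu hy).le.trans hc⟩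

variable [DecidableEq V]

lemma BallsHaveRadiusLE.union (h₁ : BallsHaveRadiusLE E W 𝒞₁ ρ) (h₂ : BallsHaveRadiusLE E W 𝒞₂ ρ) :
    BallsHaveRadiusLE E W (𝒞₁ ∪ 𝒞₂) ρ :=
  Finset.forall_mem_union.2 ⟨h₁, h₂⟩

lemma CoversFrom.union (h₁ : CoversFrom E W 𝒞₁ T₁ r) (h₂ : CoversFrom E W 𝒞₂ T₂ r) :
    CoversFrom E W (𝒞₁ ∪ 𝒞₂) (T₁ ∪ T₂) r := by
  intro w hw v hv
  rcases Finset.mem_union.1 hw with hw | hw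
  · obtain ⟨B, hB, hwB⟩ := h₁ w hw v hv
    exact ⟨B, Finset.mem_union_left _ hB, hwB⟩
  · obtain ⟨B, hB, hwB⟩ := h₂ w hw v hv
    exact ⟨B, Finset.mem_union_right _ hB, hwB⟩

lemma ShortRoundTripsStayIn.coversFrom_rtBall (h : ShortRoundTripsStayIn E W H T r)
    (hTH : T ⊆ H) : CoversFrom E W {rtBall E W H u (a + r)} (T ∩ rtBall E W H u a) r := by
  intro w hw v hv
  obtain ⟨hwT, hwa⟩ := Finset.mem_inter.1 hw
  exact ⟨_, Finset.mem_singleton_self _, rtBall_mono le_self_add hwa,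
    mem_rtBall_add (hTH hwT) (mem_rtBall.1 hwa).2 (h w hwT v hv)⟩

/-- A round trip of length `< r` through the removed ball would bring the source within
`a + r + r` of `u`. -/
lemma ShortRoundTripsStayIn.sdiff_rtBall (h : ShortRoundTripsStayIn E W H T r) :
    ShortRoundTripsStayIn E W (H \ rtBall E W H u (a + r)) (T \ rtBall E W H u (a + r + r)) r := by
  intro w hw v hv
  obtain ⟨hwT, hwfar⟩ := Finset.mem_sdiff.1 hw
  rw [Finset.coe_sdiff, Set.sdiff_eq]
  refine inducedRtdist_inter_lt (h w hwT v hv) fun x hwx hxA => hwfar ?_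
  obtain ⟨hxH, hux⟩ := mem_rtBall.1 hxA
  exact mem_rtBall_add hxH hux ((rtdist_comm x w).trans_lt hwx)

lemma sdiff_rtBall_subset_sdiff (hTH : T ⊆ H) (hcd : c ≤ d) :
    T \ rtBall E W H u d ⊆ H \ rtBall E W H u c := fun _ hw =>
  Finset.mem_sdiff.2 ⟨hTH (Finset.mem_sdiff.1 hw).1,
    fun hwc => (Finset.mem_sdiff.1 hw).2 (rtBall_mono hcd hwc)⟩

def coverDegree (𝒞 : Finset (Finset V)) (v : V) : ℕ :=
  (𝒞.filter fun B => v ∈ B).card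

lemma coverDegree_union_le : coverDegree (𝒞₁ ∪ 𝒞₂) v ≤ coverDegree 𝒞₁ v + coverDegree 𝒞₂ v := by
  rw [coverDegree, Finset.filter_union]
  exact Finset.card_union_le _ _

lemma coverDegree_insert_le_one {A : Finset V} (hA : ∀ B ∈ 𝒞, Disjoint A B)
    (h : ∀ v, coverDegree 𝒞 v ≤ 1) (v : V) : coverDegree (insert A 𝒞) v ≤ 1 := by
  rw [coverDegree, Finset.filter_insert]
  split_ifs with hv
  · rw [Finset.filter_eq_empty_iff.2 fun B hB hvB => Finset.disjoint_left.1 (hA B hB) hv hvB]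
    simp
  · exact h v

end Covers

lemma exists_lt_le_mul_of_le_pow {σ : ℝ} {f : ℕ → ℝ} {k : ℕ} (hσ : 0 ≤ σ) (hk : 0 < k)
    (h0 : 1 ≤ f 0) (hfk : f k ≤ σ ^ k) : ∃ m < k, f (m + 1) ≤ σ * f m := by
  by_contra! hgrow
  have hpow : ∀ m ≤ k, σ ^ m ≤ f m := by
    intro m hm
    induction m with
    | zero => simpa using h0
    | succ m ih =>
      calc σ ^ (m + 1) = σ * σ ^ m := pow_succ' σ m
        _ ≤ σ * f m := by gcongr; exact ih (by omega)
        _ ≤ f (m + 1) := (hgrow m (by omega)).le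
  obtain ⟨j, rfl⟩ : ∃ j, k = j + 1 := ⟨k - 1, by omega⟩
  have hj : σ ^ (j + 1) ≤ σ * f j := by
    rw [pow_succ']; gcongr; exact hpow j (by omega)
  linarith [hgrow j (by omega)]

lemma mul_card_sdiff_union_le [DecidableEq V] {σ : ℝ} {T Tin TD D : Finset V}
    (hσ : 0 ≤ σ) (hin : Tin ⊆ TD) (hTD : TD ⊆ T) (hgrowth : (TD.card : ℝ) ≤ σ * Tin.card)
    (hD : σ * D.card ≤ (σ - 1) * (T \ TD).card) :
    σ * ((TD \ Tin) ∪ D).card ≤ (σ - 1) * T.card := by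
  have h₁ : (((TD \ Tin) ∪ D).card : ℝ) ≤ (TD \ Tin).card + D.card := by
    exact_mod_cast Finset.card_union_le _ _
  have h₂ : ((TD \ Tin).card : ℝ) + Tin.card = TD.card := by
    exact_mod_cast Finset.card_sdiff_add_card_eq_card hin
  have h₃ : ((T \ TD).card : ℝ) + TD.card = T.card := by
    exact_mod_cast Finset.card_sdiff_add_card_eq_card hTD
  nlinarith [mul_le_mul_of_nonneg_left h₁ hσ]

lemma one_add_mul_log_le {σ d t : ℝ} (hσ : 1 < σ) (hd : 0 < d) (h : σ * d ≤ (σ - 1) * t) :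
    1 + σ * Real.log d ≤ σ * Real.log t := by
  have ht : 0 < t := by nlinarith
  have hlog : Real.log d - Real.log t ≤ d / t - 1 := by
    rw [← Real.log_div hd.ne' ht.ne']
    exact Real.log_le_sub_one_of_pos (by positivity)
  have hdt : σ * (d / t) ≤ σ - 1 := by
    rw [← mul_div_assoc, div_le_iff₀ ht]
    exact h
  nlinarith [mul_le_mul_of_nonneg_left hlog (by linarith : (0 : ℝ) ≤ σ)]

section Phase

variable [DecidableEq V] {S H T : Finset V} {σ : ℝ} {k : ℕ} {r : ℝ≥0∞}

structure IsPhaseCover (E : Set (V × V)) (W : V × V → ℝ) (σ : ℝ) (ρ r : ℝ≥0∞) (H T : Finset V)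
    (𝒞 : Finset (Finset V)) (D : Finset V) : Prop where
  deferred_subset : D ⊆ T
  card_deferred : σ * D.card ≤ (σ - 1) * T.card
  subset : ∀ B ∈ 𝒞, B ⊆ H
  radius : BallsHaveRadiusLE E W 𝒞 ρ
  covers : CoversFrom E W 𝒞 (T \ D) r
  coverDegree_le_one : ∀ v, coverDegree 𝒞 v ≤ 1

lemma IsPhaseCover.empty {ρ : ℝ≥0∞} : IsPhaseCover E W σ ρ r H ∅ ∅ ∅ where
  deferred_subset := subset_rfl
  card_deferred := by simp
  subset := by simp
  radius := by simp [BallsHaveRadiusLE]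
  covers := by simp [CoversFrom]
  coverDegree_le_one := by simp [coverDegree]

lemma IsPhaseCover.insert {ρ : ℝ≥0∞} {𝒞 : Finset (Finset V)} {A Tin TD D : Finset V}
    (h : IsPhaseCover E W σ ρ r (H \ A) (T \ TD) 𝒞 D) (hAH : A ⊆ H)
    (hAρ : BallsHaveRadiusLE E W {A} ρ) (hA : CoversFrom E W {A} Tin r) (hσ : 0 ≤ σ)
    (hTin : Tin ⊆ TD) (hTD : TD ⊆ T) (hgrowth : (TD.card : ℝ) ≤ σ * Tin.card) :
    IsPhaseCover E W σ ρ r H T (insert A 𝒞) ((TD \ Tin) ∪ D) where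
  deferred_subset := Finset.union_subset (Finset.sdiff_subset.trans hTD)
    (h.deferred_subset.trans Finset.sdiff_subset)
  card_deferred := mul_card_sdiff_union_le hσ hTin hTD hgrowth h.card_deferred
  subset := (Finset.forall_mem_insert _ _ _).2
    ⟨hAH, fun B hB => (h.subset B hB).trans Finset.sdiff_subset⟩
  radius := Finset.insert_eq A 𝒞 ▸ hAρ.union h.radius
  covers := by
    rw [Finset.insert_eq]
    refine (hA.union h.covers).mono fun w hw => ?_
    simp only [Finset.mem_sdiff, Finset.mem_union] at hw ⊢
    tauto
  coverDegree_le_one := coverDegree_insert_le_one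
    (fun B hB => Finset.disjoint_of_subset_right (h.subset B hB) Finset.disjoint_sdiff)
    h.coverDegree_le_one

lemma exists_level (hσ : 0 ≤ σ) (hk : 0 < k) (hr : r ≠ 0) (hS : (S.card : ℝ) ≤ σ ^ k)
    (hTS : T ⊆ S) (hu : u ∈ T) (huH : u ∈ H) :
    ∃ m < k, ((T ∩ rtBall E W H u ((2 * m + 1) * r + r + r)).card : ℝ) ≤
      σ * (T ∩ rtBall E W H u ((2 * m + 1) * r)).card := by
  set f : ℕ → ℝ := fun j => ((T ∩ rtBall E W H u ((2 * j + 1) * r)).card : ℝ)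
  have h0 : 1 ≤ f 0 := by
    simpa [f] using ⟨u, Finset.mem_inter.2 ⟨hu, self_mem_rtBall huH (by simpa using hr)⟩⟩
  have hfk : f k ≤ σ ^ k :=
    le_trans (Nat.cast_le.2 (Finset.card_le_card (Finset.inter_subset_left.trans hTS))) hS
  obtain ⟨m, hm, hle⟩ := exists_lt_le_mul_of_le_pow hσ hk h0 hfk
  refine ⟨m, hm, ?_⟩
  convert hle using 6
  push_cast
  ring

lemma exists_isPhaseCover (hσ : 1 < σ) (hk : 0 < k) (hr : r ≠ 0) (hS : (S.card : ℝ) ≤ σ ^ k)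
    (hTH : T ⊆ H) (hTS : T ⊆ S) (hstay : ShortRoundTripsStayIn E W H T r) :
    ∃ 𝒞 D, IsPhaseCover E W σ (2 * k * r) r H T 𝒞 D := by
  induction T using Finset.strongInduction generalizing H with | H T ih => ?_
  rcases T.eq_empty_or_nonempty with rfl | ⟨u, hu⟩
  · exact ⟨∅, ∅, IsPhaseCover.empty⟩
  obtain ⟨m, hmk, hgrowth⟩ := exists_level (by linarith) hk hr hS hTS hu (hTH hu)
  set a := (2 * m + 1 : ℝ≥0∞) * r
  set A := rtBall E W H u (a + r)
  set TD := T ∩ rtBall E W H u (a + r + r)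
  have hTD : TD ⊆ T := Finset.inter_subset_left
  have huTD : u ∈ TD := Finset.mem_inter.2 ⟨hu, self_mem_rtBall (hTH hu) (by simp [hr])⟩
  have hrest : T \ TD ⊆ H \ A := by
    rw [Finset.sdiff_inter_self_left]
    exact sdiff_rtBall_subset_sdiff hTH le_self_add
  have hstay' : ShortRoundTripsStayIn E W (H \ A) (T \ TD) r := by
    rw [Finset.sdiff_inter_self_left]
    exact hstay.sdiff_rtBall
  obtain ⟨𝒞, D, hphase⟩ := ih (T \ TD) (Finset.sdiff_ssubset hTD ⟨u, huTD⟩) hrest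
    (Finset.sdiff_subset.trans hTS) hstay'
  have hradA : a + r ≤ 2 * k * r :=
    calc a + r = (2 * m + 2) * r := by ring
      _ ≤ 2 * k * r := by gcongr; norm_cast; omega
  have hTin : T ∩ rtBall E W H u a ⊆ TD :=
    Finset.inter_subset_inter_left (rtBall_mono (by rw [add_assoc]; exact le_self_add))
  exact ⟨_, _, hphase.insert rtBall_subset
    (ballsHaveRadiusLE_rtBall (hTH hu) (by simp [hr]) hradA) (hstay.coversFrom_rtBall hTH)
    (by linarith) hTin hTD hgrowth⟩

lemma exists_sourcewise_cover [Fintype V] (hσ : 1 < σ) (hk : 0 < k) (hr : r ≠ 0)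
    (hS : (S.card : ℝ) ≤ σ ^ k) (T : Finset V) (hTS : T ⊆ S) :
    ∃ 𝒞, BallsHaveRadiusLE E W 𝒞 (2 * k * r) ∧ CoversFrom E W 𝒞 T r ∧
      ∀ v, (coverDegree 𝒞 v : ℝ) ≤ σ * Real.log T.card + 1 := by
  induction T using Finset.strongInduction with | H T ih => ?_
  obtain ⟨𝒞₁, D, hDT, hDcard, -, hrad₁, hcov₁, hdeg₁⟩ :=
    exists_isPhaseCover hσ hk hr hS (Finset.subset_univ T) hTS shortRoundTripsStayIn_univ
  have hdeg₁' (v : V) : (coverDegree 𝒞₁ v : ℝ) ≤ 1 := by exact_mod_cast hdeg₁ v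
  rcases D.eq_empty_or_nonempty with rfl | hD
  · refine ⟨𝒞₁, hrad₁, by simpa using hcov₁, fun v => ?_⟩
    nlinarith [hdeg₁' v, Real.log_natCast_nonneg T.card]
  have hDpos : (0 : ℝ) < D.card := by exact_mod_cast hD.card_pos
  have hDT' : D ⊂ T := hDT.ssubset_of_ne fun h => by subst h; nlinarith
  obtain ⟨𝒞₂, hrad₂, hcov₂, hdeg₂⟩ := ih D hDT' (hDT.trans hTS)
  refine ⟨𝒞₁ ∪ 𝒞₂, hrad₁.union hrad₂, ?_, fun v => ?_⟩
  · rw [← Finset.sdiff_union_of_subset hDT]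
    exact hcov₁.union hcov₂
  calc (coverDegree (𝒞₁ ∪ 𝒞₂) v : ℝ) ≤ coverDegree 𝒞₁ v + coverDegree 𝒞₂ v := by
        exact_mod_cast coverDegree_union_le
    _ ≤ 1 + (σ * Real.log D.card + 1) := add_le_add (hdeg₁' v) (hdeg₂ v)
    _ ≤ σ * Real.log T.card + 1 := by linarith [one_add_mul_log_le hσ hDpos hDcard]

end Phase

end RoundTripCover

/-- **Improved source-wise round-trip covers.**
There is an absolute constant `C > 0` such that for every weighted directed
graph `G = (V, E, W)` with `n ≥ 2` vertices and positive edge weights, every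
source set `S ⊆ V` of size `s ≥ 2`, every integer `k > 1` and every real
`R > 0`, there is an `S`-sourcewise `(C * k * log n, R)`-cover of `G` in
which every vertex is contained in at most `C * s^(1/k) * log n` balls. -/
theorem sourcewise_roundtrip_cover :
    ∃ C : ℝ, 0 < C ∧
      ∀ (V : Type) [Fintype V] [DecidableEq V] (E : Finset (V × V)) (W : V × V → ℝ),
        (∀ e ∈ E, 0 < W e) →
        2 ≤ Fintype.card V →
        ∀ S : Finset V, 2 ≤ S.card →
        ∀ k : ℕ, 1 < k →
        ∀ R : ℝ, 0 < R →
        ∃ 𝒞 : Finset (Finset V),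
          -- every ball has round-trip radius at most (C * k * log n) * R
          (∀ B ∈ 𝒞, ∃ x ∈ B, ∀ y ∈ B,
            inducedRtdist (↑E) W (↑B) x y ≤
              ENNReal.ofReal (C * (k : ℝ) * Real.log (Fintype.card V) * R)) ∧
          -- every pair in S × V at round-trip distance ≤ R lies in a common ball
          (∀ u ∈ S, ∀ v : V,
            rtdist (↑E) W u v ≤ ENNReal.ofReal R →
              ∃ B ∈ 𝒞, u ∈ B ∧ v ∈ B) ∧
          -- every vertex is contained in at most C * s^(1/k) * log n balls
          (∀ v : V,
            ((𝒞.filter (fun B => v ∈ B)).card : ℝ) ≤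
              C * (S.card : ℝ) ^ ((1 : ℝ) / (k : ℝ)) * Real.log (Fintype.card V)) := by
  refine ⟨6, by norm_num, fun V _ _ E W _ hn S hS k hk R hR => ?_⟩
  have hs : (2 : ℝ) ≤ S.card := by exact_mod_cast hS
  set σ := (S.card : ℝ) ^ ((1 : ℝ) / k)
  have hσ : 1 < σ := Real.one_lt_rpow (by linarith) (by positivity)
  have hσk : (S.card : ℝ) ≤ σ ^ k := by
    simp only [σ, one_div, Real.rpow_inv_natCast_pow (by positivity : (0 : ℝ) ≤ S.card)
      (by omega : k ≠ 0), le_refl]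
  obtain ⟨𝒞, hrad, hcov, hdeg⟩ := RoundTripCover.exists_sourcewise_cover (E := ↑E) (W := W) hσ
    (by omega) (ENNReal.ofReal_pos.2 (by positivity : 0 < 2 * R)).ne' hσk S subset_rfl
  have hlog : 0.69 < Real.log (Fintype.card V) :=
    (by norm_num : (0.69 : ℝ) < 0.6931471803).trans <| Real.log_two_gt_d9.trans_le <|
      Real.log_le_log two_pos (by exact_mod_cast hn)
  have hlogS : Real.log S.card ≤ Real.log (Fintype.card V) :=
    Real.log_le_log (by linarith) (by exact_mod_cast Finset.card_le_univ S)
  have hradius : (2 * k : ℝ≥0∞) * ENNReal.ofReal (2 * R) = ENNReal.ofReal (2 * k * (2 * R)) := by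
    rw [ENNReal.ofReal_mul (by positivity)]
    norm_num
  refine ⟨𝒞, fun B hB => ?_, fun u hu v huv => hcov u hu v (huv.trans_lt ?_), fun v => ?_⟩
  · obtain ⟨x, hx, hxB⟩ := hrad B hB
    refine ⟨x, hx, fun y hy => (hxB y hy).trans (hradius.trans_le (ENNReal.ofReal_le_ofReal ?_))⟩
    nlinarith [mul_lt_mul_of_pos_left hlog (by positivity : (0 : ℝ) < k * R)]
  · exact (ENNReal.ofReal_lt_ofReal_iff (by positivity)).2 (by linarith)
  · refine (hdeg v).trans ?_
    nlinarith [mul_lt_mul_of_pos_left hlog (by linarith : (0 : ℝ) < σ)]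
end
end

section
/- Let V be a finite set, let U ⊆ V be nonempty, and let d : V×V → [0,∞] satisfy the triangle inequality d(x,z) ≤ d(x,y) + d(y,z) for all x,y,z ∈ V. Fix reals r > 0, R > 0, s ≥ 2, set β = (log s)/r, and let (r_x)_{x∈U} be independent random variables each distributed as Exp(β). Assign each vertex w ∈ V to a center x ∈ U maximizing r_x − d(x,w) whenever max_{x∈U}(r_x − d(x,w)) > 0, and leave w unassigned otherwise (almost surely the maximizer is unique). Then for any two vertices u, v ∈ V with d(u,v) + d(v,u) ≤ R, the probability that u and v are either assigned to the same center or both unassigned is at least e^{−βR} = s^{−R/r}. -/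
open MeasureTheory ProbabilityTheory
open scoped ENNReal

noncomputable section

/-- The score `r_x - d(x,w)` (as an extended real) of a center `x` for a vertex
`w`, where the radius `r_x = T x ω` is random. -/
def score {V Ω : Type*} (d : V → V → ℝ≥0∞) (T : V → Ω → ℝ) (x w : V) (ω : Ω) :
    EReal :=
  (T x ω : EReal) - ((d x w : ℝ≥0∞) : EReal)

/-- Vertex `w` is assigned to center `x ∈ U`: the score of `x` for `w` is
positive and maximal among all centers in `U`. -/
def AssignedTo {V Ω : Type*} (U : Finset V) (d : V → V → ℝ≥0∞)
    (T : V → Ω → ℝ) (x w : V) (ω : Ω) : Prop :=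
  x ∈ U ∧ 0 < score d T x w ω ∧ ∀ y ∈ U, score d T y w ω ≤ score d T x w ω

/-- Vertex `w` is unassigned: no center in `U` has positive score for `w`. -/
def Unassigned {V Ω : Type*} (U : Finset V) (d : V → V → ℝ≥0∞)
    (T : V → Ω → ℝ) (w : V) (ω : Ω) : Prop :=
  ∀ x ∈ U, score d T x w ω ≤ 0

/-!
Let `m x = min (d x u) (d x v)` and `W x = r x - m x` for the centers `x` at finite distance from
`u` (equivalently, from `v`). As `d u v ≤ R` and `d v u ≤ R`, the scores of `x` for `u` and for `v`
both lie in `[W x - R, W x]`. So both vertices are unassigned when every `W x ≤ 0`, and both go to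
`x` when `W x` exceeds `R` and every other `W y` by more than `R`.

By memorylessness of `Exp(β)`, lowering `r x` by `R` carries the latter event onto the event that
`W x` is the strict positive maximum, and scales its probability by `e^{-βR}`. Ties `W x = W y` are
null, so "all `W ≤ 0`" and these maximum events exhaust the probability space up to a null set,
which leaves probability at least `e^{-βR}` for the good events.
-/

open Set Function

namespace ProbabilityTheory

instance (β : ℝ) : NullSingletonClass (expMeasure β) := by
  unfold expMeasure gammaMeasure
  infer_instance

lemma indicator_Ici_exponentialPDF {β R : ℝ} (hR : 0 ≤ R) (x : ℝ) :
    (Ici R).indicator (exponentialPDF β) x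
      = ENNReal.ofReal (Real.exp (-(β * R))) * exponentialPDF β (x - R) := by
  rcases lt_or_ge x R with hx | hx
  · rw [indicator_of_notMem (notMem_Ici.2 hx), exponentialPDF_of_neg (by linarith), mul_zero]
  · rw [indicator_of_mem (mem_Ici.2 hx), exponentialPDF_of_nonneg (by linarith),
      exponentialPDF_of_nonneg (by linarith), ← ENNReal.ofReal_mul (Real.exp_nonneg _),
      mul_left_comm, ← Real.exp_add]
    ring_nf

lemma map_sub_restrict_Ici_expMeasure {β R : ℝ} (hR : 0 ≤ R) :
    ((expMeasure β).restrict (Ici R)).map (· - R)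
      = ENNReal.ofReal (Real.exp (-(β * R))) • expMeasure β := by
  have hpdf : Measurable (exponentialPDF β) := by unfold exponentialPDF; fun_prop
  have hsub : Measurable (· - R : ℝ → ℝ) := measurable_id.sub_const R
  ext A hA
  have hP : MeasurableSet ((· - R) ⁻¹' A) := hsub hA
  calc ((expMeasure β).restrict (Ici R)).map (· - R) A
      = ∫⁻ x in (· - R) ⁻¹' A, (Ici R).indicator (exponentialPDF β) x := by
        rw [Measure.map_apply hsub hA, Measure.restrict_apply hP, lintegral_indicator
          measurableSet_Ici, Measure.restrict_restrict measurableSet_Ici, inter_comm]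
        exact withDensity_apply _ (measurableSet_Ici.inter hP)
    _ = ENNReal.ofReal (Real.exp (-(β * R)))
          * ∫⁻ x in (· - R) ⁻¹' A, exponentialPDF β (x - R) := by
        simp_rw [indicator_Ici_exponentialPDF hR]
        exact lintegral_const_mul _ (hpdf.comp hsub)
    _ = ENNReal.ofReal (Real.exp (-(β * R))) * expMeasure β A := by
        rw [(measurePreserving_sub_right volume R).setLIntegral_comp_preimage hA hpdf]
        exact congrArg _ (withDensity_apply _ hA).symm

end ProbabilityTheory

lemma Set.preimage_update_univ_pi_inter {ι α : Type*} [DecidableEq ι] (i : ι) (f : α → α)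
    (s : ι → Set α) (A : Set α) :
    (fun t => update t i (f (t i))) ⁻¹' univ.pi s ∩ {t | t i ∈ A}
      = univ.pi (update s i (f ⁻¹' s i ∩ A)) := by
  ext t
  simp only [mem_inter_iff, mem_preimage, mem_univ_pi, mem_ofPred_eq]
  constructor
  · rintro ⟨hts, htA⟩ j
    rcases eq_or_ne j i with rfl | hj
    · simpa [htA] using hts j
    · simpa [hj] using hts j
  · intro hts
    have hi : t i ∈ f ⁻¹' s i ∩ A := by simpa using hts i
    refine ⟨fun j => ?_, hi.2⟩
    rcases eq_or_ne j i with rfl | hj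
    · simpa using hi.1
    · simpa [hj] using hts j

namespace MeasureTheory.Measure

variable {ι α : Type*} [Fintype ι] [MeasurableSpace α]

lemma map_update_restrict_pi [DecidableEq ι] {μ : Measure α} [IsFiniteMeasure μ] (i : ι)
    {A : Set α} {f : α → α} (hf : Measurable f) {c : ℝ≥0∞}
    (h : (μ.restrict A).map f = c • μ) :
    ((Measure.pi fun _ : ι => μ).restrict {t | t i ∈ A}).map (fun t => update t i (f (t i)))
      = c • Measure.pi fun _ => μ := by
  have hΦ : Measurable fun t : ι → α => update t i (f (t i)) := by fun_prop
  have hbox (s : ι → Set α) (hs : ∀ j, MeasurableSet (s j)) :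
      ((Measure.pi fun _ : ι => μ).restrict {t | t i ∈ A}).map
        (fun t => update t i (f (t i))) (univ.pi s) = c * ∏ j, μ (s j) := by
    have hsi : μ (f ⁻¹' s i ∩ A) = c * μ (s i) := by
      rw [← restrict_apply (hf (hs i)), ← map_apply hf (hs i), h, smul_apply, smul_eq_mul]
    rw [map_apply hΦ (.univ_pi hs), restrict_apply (hΦ (.univ_pi hs)),
      preimage_update_univ_pi_inter, pi_pi]
    simp_rw [apply_update (fun _ => μ), Finset.prod_update_of_mem (Finset.mem_univ i), hsi,
      mul_assoc, ← Finset.mul_prod_erase _ _ (Finset.mem_univ i), Finset.sdiff_singleton_eq_erase]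
  have hrhs (s : ι → Set α) : (c • Measure.pi fun _ : ι => μ) (univ.pi s) = c * ∏ j, μ (s j) := by
    rw [smul_apply, pi_pi, smul_eq_mul]
  refine ext_of_generate_finite _ generateFrom_pi.symm isPiSystem_pi ?_ ?_
  · rintro _ ⟨s, hs, rfl⟩
    rw [hbox s fun j => hs j (mem_univ j), hrhs]
  · rw [← Set.pi_univ, hbox _ fun _ => .univ, hrhs]

lemma pi_sub_eq_null {μ : Measure ℝ} [IsProbabilityMeasure μ] [NullSingletonClass μ]
    {i j : ι} (hij : i ≠ j) (c : ℝ) :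
    Measure.pi (fun _ : ι => μ) {t | t i - t j = c} = 0 := by
  have hind : IndepFun (fun t : ι → ℝ => t i) (fun t => t j) (Measure.pi fun _ => μ) :=
    (iIndepFun_pi (X := fun _ => id) fun _ => aemeasurable_id).indepFun hij
  have hE : MeasurableSet {p : ℝ × ℝ | p.1 - p.2 = c} :=
    measurableSet_eq_fun (by fun_prop) measurable_const
  have hsection (a : ℝ) : Prod.mk a ⁻¹' {p : ℝ × ℝ | p.1 - p.2 = c} = {a - c} := by
    ext b
    simp only [mem_preimage, mem_ofPred_eq, mem_singleton_iff]
    constructor <;> intro h <;> linarith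
  change Measure.pi (fun _ : ι => μ) ((fun t => (t i, t j)) ⁻¹' {p : ℝ × ℝ | p.1 - p.2 = c}) = 0
  rw [← map_apply (by fun_prop) hE,
    (indepFun_iff_map_prod_eq_prod_map_map (measurable_pi_apply i).aemeasurable
      (measurable_pi_apply j).aemeasurable).1 hind,
    (measurePreserving_eval _ i).map_eq, (measurePreserving_eval _ j).map_eq, prod_apply hE]
  simp [hsection]

end MeasureTheory.Measure

section Competition

variable {ι : Type*} (S : Finset ι) (m : ι → ℝ)

def belowSet : Set (ι → ℝ) :=
  {t | ∀ y ∈ S, t y ≤ m y}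

def leadSet [DecidableEq ι] (R : ℝ) (x : ι) : Set (ι → ℝ) :=
  {t | m x + R < t x ∧ ∀ y ∈ S.erase x, t y - m y + R < t x - m x}

variable {S m}

lemma measurableSet_belowSet : MeasurableSet (belowSet S m) := by
  simp only [belowSet, ofPred_forall]
  exact S.measurableSet_biInter fun y _ => measurableSet_le (measurable_pi_apply y) measurable_const

variable [DecidableEq ι]

lemma measurableSet_leadSet (R : ℝ) (x : ι) : MeasurableSet (leadSet S m R x) := by
  simp only [leadSet, ofPred_and, ofPred_forall]
  exact (measurableSet_lt measurable_const (measurable_pi_apply x)).inter <|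
    (S.erase x).measurableSet_biInter fun y _ => measurableSet_lt (by fun_prop) (by fun_prop)

lemma leadSet_eq_preimage_update {R : ℝ} {x : ι} (hm : 0 ≤ m x) :
    leadSet S m R x
      = (fun t => update t x (t x - R)) ⁻¹' leadSet S m 0 x ∩ {t | t x ∈ Ici R} := by
  ext t
  simp only [leadSet, mem_inter_iff, mem_preimage, mem_ofPred_eq, mem_Ici, update_self]
  constructor
  · rintro ⟨hx, hy⟩
    refine ⟨⟨by linarith, fun y hyS => ?_⟩, by linarith⟩
    rw [update_of_ne (Finset.ne_of_mem_erase hyS)]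
    linarith [hy y hyS]
  · rintro ⟨⟨hx, hy⟩, -⟩
    refine ⟨by linarith, fun y hyS => ?_⟩
    have := hy y hyS
    rw [update_of_ne (Finset.ne_of_mem_erase hyS)] at this
    linarith

lemma mem_belowSet_or_leadSet_or_tie (t : ι → ℝ) :
    t ∈ belowSet S m ∨ (∃ x ∈ S, t ∈ leadSet S m 0 x) ∨
      ∃ x ∈ S, ∃ y ∈ S.erase x, t x - t y = m x - m y := by
  by_cases hbelow : t ∈ belowSet S m
  · exact Or.inl hbelow
  obtain ⟨y, hyS, hy⟩ : ∃ y ∈ S, m y < t y := by simpa [belowSet] using hbelow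
  obtain ⟨x, hxS, hmax⟩ := S.exists_max_image (fun i => t i - m i) ⟨y, hyS⟩
  by_cases htie : ∃ z ∈ S.erase x, t x - t z = m x - m z
  · exact Or.inr (Or.inr ⟨x, hxS, htie⟩)
  push Not at htie
  refine Or.inr (Or.inl ⟨x, hxS, by linarith [hmax y hyS], fun z hz => ?_⟩)
  have hle := hmax z (Finset.mem_of_mem_erase hz)
  have hne := htie z hz
  rw [add_zero]
  refine lt_of_le_of_ne hle fun h => hne ?_
  linarith

lemma disjoint_belowSet_leadSet {R : ℝ} (hR : 0 ≤ R) {x : ι} (hx : x ∈ S) :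
    Disjoint (belowSet S m) (leadSet S m R x) :=
  disjoint_left.2 fun _ hbelow hlead => by linarith [hbelow x hx, hlead.1]

lemma pairwiseDisjoint_leadSet {R : ℝ} (hR : 0 ≤ R) :
    (S : Set ι).PairwiseDisjoint (leadSet S m R) := by
  intro x hx y hy hxy
  refine disjoint_left.2 fun t htx hty => ?_
  have h1 := htx.2 y (Finset.mem_erase.2 ⟨hxy.symm, hy⟩)
  have h2 := hty.2 x (Finset.mem_erase.2 ⟨hxy, hx⟩)
  linarith

lemma one_le_measure_belowSet_add_sum_leadSet {ν : Measure (ι → ℝ)} [IsProbabilityMeasure ν]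
    (hties : ∀ x y, x ≠ y → ∀ c, ν {t | t x - t y = c} = 0) :
    1 ≤ ν (belowSet S m) + ∑ x ∈ S, ν (leadSet S m 0 x) := by
  set N := ⋃ x ∈ S, ⋃ y ∈ S.erase x, {t : ι → ℝ | t x - t y = m x - m y}
  have hN : ν N = 0 :=
    (measure_biUnion_null_iff S.countable_toSet).2 fun x _ =>
      (measure_biUnion_null_iff (S.erase x).countable_toSet).2 fun y hy =>
        hties x y (Finset.ne_of_mem_erase hy).symm _
  have hcover : univ ⊆ (belowSet S m ∪ ⋃ x ∈ S, leadSet S m 0 x) ∪ N := by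
    intro t _
    rcases mem_belowSet_or_leadSet_or_tie (S := S) (m := m) t with
      h | ⟨x, hx, h⟩ | ⟨x, hx, y, hy, h⟩
    · exact Or.inl (Or.inl h)
    · exact Or.inl (Or.inr (mem_biUnion hx h))
    · exact Or.inr (mem_biUnion hx (mem_biUnion hy h))
  calc 1 = ν univ := measure_univ.symm
    _ ≤ ν (belowSet S m ∪ ⋃ x ∈ S, leadSet S m 0 x) + ν N :=
      (measure_mono hcover).trans (measure_union_le _ _)
    _ ≤ ν (belowSet S m) + ∑ x ∈ S, ν (leadSet S m 0 x) := by
      rw [hN, add_zero]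
      exact (measure_union_le _ _).trans (by gcongr; exact measure_biUnion_finset_le _ _)

lemma measure_belowSet_union_leadSet {ν : Measure (ι → ℝ)} {R : ℝ} (hR : 0 ≤ R) :
    ν (belowSet S m ∪ ⋃ x ∈ S, leadSet S m R x)
      = ν (belowSet S m) + ∑ x ∈ S, ν (leadSet S m R x) := by
  have hdisj : Disjoint (belowSet S m) (⋃ x ∈ S, leadSet S m R x) :=
    disjoint_iUnion₂_right.2 fun x hx => disjoint_belowSet_leadSet hR hx
  rw [measure_union hdisj (S.measurableSet_biUnion fun x _ => measurableSet_leadSet R x),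
    measure_biUnion_finset (pairwiseDisjoint_leadSet hR) fun x _ => measurableSet_leadSet R x]

variable [Fintype ι] {β R : ℝ}

lemma pi_expMeasure_leadSet (hβ : 0 < β) (hR : 0 ≤ R) {x : ι} (hm : 0 ≤ m x) :
    Measure.pi (fun _ : ι => expMeasure β) (leadSet S m R x)
      = ENNReal.ofReal (Real.exp (-(β * R)))
          * Measure.pi (fun _ : ι => expMeasure β) (leadSet S m 0 x) := by
  have := isProbabilityMeasure_expMeasure hβ
  have hΦ : Measurable fun t : ι → ℝ => update t x (t x - R) := by fun_prop
  rw [leadSet_eq_preimage_update hm, ← Measure.restrict_apply (hΦ (measurableSet_leadSet _ _)),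
    ← Measure.map_apply hΦ (measurableSet_leadSet _ _),
    Measure.map_update_restrict_pi x (by fun_prop : Measurable (· - R : ℝ → ℝ))
      (map_sub_restrict_Ici_expMeasure hR), Measure.smul_apply, smul_eq_mul]

lemma ofReal_exp_le_pi_expMeasure_belowSet_union (hβ : 0 < β) (hR : 0 ≤ R)
    (hm : ∀ x ∈ S, 0 ≤ m x) :
    ENNReal.ofReal (Real.exp (-(β * R)))
      ≤ Measure.pi (fun _ : ι => expMeasure β) (belowSet S m ∪ ⋃ x ∈ S, leadSet S m R x) := by
  have := isProbabilityMeasure_expMeasure hβ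
  set π := Measure.pi fun _ : ι => expMeasure β
  set c := ENNReal.ofReal (Real.exp (-(β * R)))
  have hc : c ≤ 1 := ENNReal.ofReal_le_one.2 (Real.exp_le_one_iff.2 (by nlinarith))
  have hcover : 1 ≤ π (belowSet S m) + ∑ x ∈ S, π (leadSet S m 0 x) :=
    one_le_measure_belowSet_add_sum_leadSet fun x y hxy a => Measure.pi_sub_eq_null hxy a
  calc c = c * 1 := (mul_one c).symm
    _ ≤ c * (π (belowSet S m) + ∑ x ∈ S, π (leadSet S m 0 x)) := by gcongr
    _ ≤ π (belowSet S m) + ∑ x ∈ S, π (leadSet S m R x) := by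
      rw [mul_add, Finset.mul_sum,
        Finset.sum_congr rfl fun x hx => pi_expMeasure_leadSet hβ hR (hm x hx)]
      gcongr
      exact mul_le_of_le_one_left' hc
    _ = π (belowSet S m ∪ ⋃ x ∈ S, leadSet S m R x) :=
      (measure_belowSet_union_leadSet hR).symm

end Competition


lemma ENNReal.toReal_le_min_toReal_add {a b c : ℝ≥0∞} {R : ℝ} (hR : 0 ≤ R) (h : a ≤ b + c)
    (hb : b ≠ ⊤) (hc : c ≤ ENNReal.ofReal R) : a.toReal ≤ min a.toReal b.toReal + R := by
  have hc' : c.toReal ≤ R := ENNReal.toReal_le_of_le_ofReal hR hc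
  have hab := ENNReal.toReal_le_add h hb (ne_top_of_le_ne_top ENNReal.ofReal_ne_top hc)
  rw [← min_add_add_right]
  exact le_min (by linarith) (by linarith)

section Clustering

variable {V Ω : Type*} {d : V → V → ℝ≥0∞} {T : V → Ω → ℝ} {x w : V} {ω : Ω}

lemma score_eq_coe_sub (h : d x w ≠ ⊤) :
    score d T x w ω = ((T x ω - (d x w).toReal : ℝ) : EReal) := by
  rw [score, ← ENNReal.ofReal_toReal h, EReal.coe_ennreal_ofReal,
    max_eq_left ENNReal.toReal_nonneg, ENNReal.toReal_ofReal ENNReal.toReal_nonneg, EReal.coe_sub]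

lemma score_eq_bot (h : d x w = ⊤) : score d T x w ω = ⊥ := by
  rw [score, h, EReal.coe_ennreal_top, EReal.sub_top]

variable {U : Finset V} {S : Finset U} {m : U → ℝ}

lemma unassigned_of_mem_belowSet (hS : ∀ i : U, i ∈ S ↔ d i w ≠ ⊤)
    (hlow : ∀ i ∈ S, m i ≤ (d i w).toReal) (h : (fun i : U => T i ω) ∈ belowSet S m) :
    Unassigned U d T w ω := by
  intro y hy
  by_cases hyw : d y w = ⊤
  · rw [score_eq_bot hyw]
    exact bot_le
  have hyS := (hS ⟨y, hy⟩).2 hyw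
  rw [score_eq_coe_sub hyw]
  exact EReal.coe_nonpos.2 (by linarith [h _ hyS, hlow _ hyS])

lemma assignedTo_of_mem_leadSet [DecidableEq V] (hS : ∀ i : U, i ∈ S ↔ d i w ≠ ⊤)
    (hlow : ∀ i ∈ S, m i ≤ (d i w).toReal) {R : ℝ} (hup : ∀ i ∈ S, (d i w).toReal ≤ m i + R)
    {x : U} (hx : x ∈ S) (h : (fun i : U => T i ω) ∈ leadSet S m R x) :
    AssignedTo U d T x w ω := by
  have hxw := (hS x).1 hx
  refine ⟨x.2, ?_, fun y hy => ?_⟩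
  · rw [score_eq_coe_sub hxw]
    exact EReal.coe_pos.2 (by linarith [h.1, hup x hx])
  by_cases hyw : d y w = ⊤
  · rw [score_eq_bot hyw]
    exact bot_le
  have hyS := (hS ⟨y, hy⟩).2 hyw
  rcases eq_or_ne (⟨y, hy⟩ : U) x with rfl | hne
  · exact le_rfl
  rw [score_eq_coe_sub hyw, score_eq_coe_sub hxw]
  exact EReal.coe_le_coe_iff.2
    (by linarith [h.2 _ (Finset.mem_erase.2 ⟨hne, hyS⟩), hlow _ hyS, hup x hx])

def finiteCenters (U : Finset V) (d : V → V → ℝ≥0∞) (u : V) : Finset U :=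
  Finset.univ.filter fun i => d i u ≠ ⊤

def minDist (d : V → V → ℝ≥0∞) (u v x : V) : ℝ :=
  min (d x u).toReal (d x v).toReal

lemma same_cluster_of_mem_belowSet_union_leadSet [DecidableEq V]
    (htri : ∀ x y z : V, d x z ≤ d x y + d y z) {R : ℝ} (hR : 0 ≤ R) {u v : V}
    (huv : d u v ≤ ENNReal.ofReal R) (hvu : d v u ≤ ENNReal.ofReal R)
    (h : (fun i : U => T i ω) ∈ belowSet (finiteCenters U d u) (fun i => minDist d u v i) ∪
      ⋃ x ∈ finiteCenters U d u, leadSet (finiteCenters U d u) (fun i => minDist d u v i) R x) :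
    (∃ x ∈ U, AssignedTo U d T x u ω ∧ AssignedTo U d T x v ω) ∨
      (Unassigned U d T u ω ∧ Unassigned U d T v ω) := by
  have hSu (i : U) : i ∈ finiteCenters U d u ↔ d i u ≠ ⊤ := by simp [finiteCenters]
  have hSv (i : U) : i ∈ finiteCenters U d u ↔ d i v ≠ ⊤ := (hSu i).trans
    ⟨fun h => ne_top_of_le_ne_top (ENNReal.add_ne_top.2
        ⟨h, ne_top_of_le_ne_top ENNReal.ofReal_ne_top huv⟩) (htri i u v),
      fun h => ne_top_of_le_ne_top (ENNReal.add_ne_top.2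
        ⟨h, ne_top_of_le_ne_top ENNReal.ofReal_ne_top hvu⟩) (htri i v u)⟩
  have hup_u (i) (hi : i ∈ finiteCenters U d u) : (d i u).toReal ≤ minDist d u v i + R :=
    ENNReal.toReal_le_min_toReal_add hR (htri i v u) ((hSv i).1 hi) hvu
  have hup_v (i) (hi : i ∈ finiteCenters U d u) : (d i v).toReal ≤ minDist d u v i + R := by
    rw [minDist, min_comm]
    exact ENNReal.toReal_le_min_toReal_add hR (htri i u v) ((hSu i).1 hi) huv
  rcases h with hbelow | hlead
  · exact Or.inr ⟨unassigned_of_mem_belowSet hSu (fun i _ => min_le_left _ _) hbelow,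
      unassigned_of_mem_belowSet hSv (fun i _ => min_le_right _ _) hbelow⟩
  · obtain ⟨x, hx, hxlead⟩ := mem_iUnion₂.1 hlead
    exact Or.inl ⟨x, x.2,
      assignedTo_of_mem_leadSet hSu (fun i _ => min_le_left _ _) hup_u hx hxlead,
      assignedTo_of_mem_leadSet hSv (fun i _ => min_le_right _ _) hup_v hx hxlead⟩

end Clustering

theorem same_cluster_probability_general
    {Ω : Type*} [MeasurableSpace Ω] (μ : Measure Ω) [IsProbabilityMeasure μ]
    {V : Type*} (U : Finset V)
    (d : V → V → ℝ≥0∞) (htri : ∀ x y z : V, d x z ≤ d x y + d y z)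
    (r R s β : ℝ) (hr : 0 < r) (hR : 0 < R) (hs : 2 ≤ s)
    (hβ : β = Real.log s / r)
    (T : V → Ω → ℝ) (hmeas : ∀ x : V, Measurable (T x))
    (hdist : ∀ x ∈ U, μ.map (T x) = expMeasure β)
    (hindep : iIndepFun
      (fun x : {y : V // y ∈ U} => T x.1) μ)
    (u v : V) (huv : d u v + d v u ≤ ENNReal.ofReal R) :
    ENNReal.ofReal (Real.exp (-β * R)) ≤
      μ {ω | (∃ x ∈ U, AssignedTo U d T x u ω ∧ AssignedTo U d T x v ω) ∨
             (Unassigned U d T u ω ∧ Unassigned U d T v ω)} := by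
  classical
  have hβ0 : 0 < β := hβ ▸ div_pos (Real.log_pos (by linarith)) hr
  set S := finiteCenters U d u
  set m : U → ℝ := fun i => minDist d u v i
  have hlaw : μ.map (fun ω (i : U) => T i ω) = Measure.pi fun _ => expMeasure β :=
    (hindep.map_fun_eq_pi_map fun i : U => (hmeas i).aemeasurable).trans
      (congrArg Measure.pi (funext fun i : U => hdist i i.2))
  have hgood : MeasurableSet (belowSet S m ∪ ⋃ x ∈ S, leadSet S m R x) :=
    measurableSet_belowSet.union (S.measurableSet_biUnion fun x _ => measurableSet_leadSet R x)
  calc ENNReal.ofReal (Real.exp (-β * R))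
      ≤ Measure.pi (fun _ : U => expMeasure β) (belowSet S m ∪ ⋃ x ∈ S, leadSet S m R x) :=
        neg_mul β R ▸ ofReal_exp_le_pi_expMeasure_belowSet_union hβ0 hR.le
          fun i _ => le_min ENNReal.toReal_nonneg ENNReal.toReal_nonneg
    _ = μ ((fun ω (i : U) => T i ω) ⁻¹' (belowSet S m ∪ ⋃ x ∈ S, leadSet S m R x)) := by
        rw [← hlaw, Measure.map_apply (measurable_pi_lambda _ fun i : U => hmeas i) hgood]
    _ ≤ _ := measure_mono fun ω =>
        same_cluster_of_mem_belowSet_union_leadSet htri hR.le (le_self_add.trans huv)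
          (le_add_self.trans huv)

/-- **Close vertices are separated with small probability.**
For the exponential-clustering rule with independent `Exp(β)` radii,
`β = (log s)/r`, any two vertices `u, v` at round-trip distance at most `R`
end up in the same cluster (assigned to a common center, or both unassigned)
with probability at least `e^{-βR} = s^{-R/r}`. -/
theorem same_cluster_probability
    {Ω : Type*} [MeasurableSpace Ω] (μ : Measure Ω) [IsProbabilityMeasure μ]
    {V : Type*} [Fintype V] (U : Finset V) (hUne : U.Nonempty)
    (d : V → V → ℝ≥0∞) (htri : ∀ x y z : V, d x z ≤ d x y + d y z)
    (r R s β : ℝ) (hr : 0 < r) (hR : 0 < R) (hs : 2 ≤ s)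
    (hβ : β = Real.log s / r)
    (T : V → Ω → ℝ) (hmeas : ∀ x : V, Measurable (T x))
    (hdist : ∀ x ∈ U, μ.map (T x) = expMeasure β)
    (hindep : iIndepFun
      (fun x : {y : V // y ∈ U} => T x.1) μ)
    (u v : V) (huv : d u v + d v u ≤ ENNReal.ofReal R) :
    ENNReal.ofReal (Real.exp (-β * R)) ≤
      μ {ω | (∃ x ∈ U, AssignedTo U d T x u ω ∧ AssignedTo U d T x v ω) ∨
             (Unassigned U d T u ω ∧ Unassigned U d T v ω)} :=
  same_cluster_probability_general μ U d htri r R s β hr hR hs hβ T hmeas hdist hindep u v huv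
end
end

section
/- Let G = (V,E,W) be a weighted directed graph with n ≥ 2 vertices whose edge weights all lie in [1, w], let S ⊆ V, let β ≥ 1 be a real, and set L = ⌈log₂(2nw)⌉. For each i = 1, …, L, let 𝒞_i be an S-sourcewise (β, 2^i)-cover of G, and for each ball B of 𝒞_i fix a center x_B ∈ B such that d_{G[B]}(x_B ⇄ y) ≤ β·2^i for every y ∈ B. Let H be a subgraph of G such that for every such ball B and every y ∈ B, d_H(x_B, y) ≤ d_{G[B]}(x_B, y) and d_H(y, x_B) ≤ d_{G[B]}(y, x_B). Then H is an S-sourcewise 4β-roundtrip spanner of G. Moreover, if H is taken to be exactly the union, over all balls B of all the covers 𝒞_i, of a shortest-path out-tree from x_B to all vertices of B and a shortest-path in-tree from all vertices of B to x_B in G[B], and if every vertex of V lies in at most μ balls of each 𝒞_i, then H has at most 2·μ·n·L edges. -/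
open scoped ENNReal

noncomputable section

/-- The one-way distance from `u` to `v` in the subgraph induced by the vertex
set `B`. -/
def inducedGdist {V : Type*} (E : Set (V × V)) (W : V × V → ℝ) (B : Set V)
    (u v : V) : ℝ≥0∞ :=
  gdist (E ∩ B ×ˢ B) W u v

/-- `T` is a shortest-path out-tree from `x` to all vertices of `B` in the
subgraph of `(V, E, W)` induced by `B`: its edges are induced edges, every
vertex has in-degree at most one in `T`, the root `x` has in-degree zero, and
`T` realizes the induced distances from `x` to every vertex of `B`. -/
def IsSPOutTree {V : Type*} [DecidableEq V] (E : Finset (V × V))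
    (W : V × V → ℝ) (B : Finset V) (x : V) (T : Finset (V × V)) : Prop :=
  T ⊆ E.filter (fun e => e.1 ∈ B ∧ e.2 ∈ B) ∧
  (∀ v : V, (T.filter (fun e => e.2 = v)).card ≤ 1) ∧
  (∀ e ∈ T, e.2 ≠ x) ∧
  (∀ y ∈ B, gdist (↑T) W x y = inducedGdist (↑E) W (↑B) x y)

/-- `T` is a shortest-path in-tree from all vertices of `B` to `x` in the
subgraph of `(V, E, W)` induced by `B`. -/
def IsSPInTree {V : Type*} [DecidableEq V] (E : Finset (V × V))
    (W : V × V → ℝ) (B : Finset V) (x : V) (T : Finset (V × V)) : Prop :=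
  T ⊆ E.filter (fun e => e.1 ∈ B ∧ e.2 ∈ B) ∧
  (∀ v : V, (T.filter (fun e => e.1 = v)).card ≤ 1) ∧
  (∀ e ∈ T, e.1 ≠ x) ∧
  (∀ y ∈ B, gdist (↑T) W y x = inducedGdist (↑E) W (↑B) y x)

/-!
Fix `u ∈ S` and `v` with finite round-trip distance `t`. Weights lie in `[1, w]` and a shortest
walk can be taken without repeated vertices, so `2 ≤ t ≤ 2 n w` and some scale `i ∈ [1, L]`
has `t ≤ 2^i ≤ 2 t`. The cover at that scale has a ball `B` containing `u` and `v`; going around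
through its center, `d_H(u ⇄ v) ≤ d_H(x_B ⇄ u) + d_H(x_B ⇄ v) ≤ 2 β 2^i ≤ 4 β t`.

For the size bound, a shortest-path tree of `B` has at most `|B|` edges (at most one entering,
resp. leaving, each vertex), and by double counting the balls of one cover have total size at
most `μ n`.
-/

theorem List.Duplicate.exists_eq_append {α : Type*} {a : α} {l : List α}
    (h : List.Duplicate a l) : ∃ s m r, l = s ++ a :: (m ++ a :: r) := by
  induction h with
  | cons_mem h =>
    obtain ⟨m, r, rfl⟩ := List.append_of_mem h
    exact ⟨[], m, r, rfl⟩
  | cons_duplicate _ ih =>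
    obtain ⟨s, m, r, rfl⟩ := ih
    exact ⟨_ :: s, m, r, rfl⟩

section Walks

variable {V : Type*} {E : Set (V × V)} {W : V × V → ℝ} {u v a : V}

theorem walkCost_append_cons (a : V) :
    ∀ l₁ l₂ : List V,
      walkCost W (l₁ ++ a :: l₂) = walkCost W (l₁ ++ [a]) + walkCost W (a :: l₂)
  | [], _ => by simp [walkCost]
  | [_], _ => by simp [walkCost]
  | b :: c :: l₁, l₂ => by
    simp only [List.cons_append, walkCost]
    rw [← List.cons_append, walkCost_append_cons a (c :: l₁), List.cons_append, add_assoc]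

theorem isWalk_append_cons_iff {l₁ l₂ : List V} :
    IsWalk E u v (l₁ ++ a :: l₂) ↔
      IsWalk E u a (l₁ ++ [a]) ∧ IsWalk E a v (a :: l₂) := by
  have hhead : (l₁ ++ a :: l₂).head? = (l₁ ++ [a]).head? := by cases l₁ <;> rfl
  have hlast : (l₁ ++ a :: l₂).getLast? = (a :: l₂).getLast? := by
    simp [List.getLast?_append, List.getLast?_cons]
  unfold IsWalk
  rw [List.Chain', List.isChain_split, hhead, hlast]
  simp only [List.getLast?_concat, List.head?_cons, and_true]
  tauto

theorem gdist_le {l : List V} (h : IsWalk E u v l) : gdist E W u v ≤ walkCost W l :=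
  iInf₂_le l h

theorem gdist_self (u : V) : gdist E W u u = 0 :=
  nonpos_iff_eq_zero.mp (gdist_le (l := [u]) ⟨List.isChain_singleton u, rfl, rfl⟩)

theorem gdist_triangle (u m v : V) : gdist E W u v ≤ gdist E W u m + gdist E W m v := by
  simp only [gdist, ENNReal.iInf_add, ENNReal.add_iInf]
  refine le_iInf₂ fun l₂ h₂ => le_iInf₂ fun l₁ h₁ => ?_
  obtain ⟨l₁, rfl⟩ := List.getLast?_eq_some_iff.mp h₁.2.2
  obtain ⟨l₂, rfl⟩ := List.head?_eq_some_iff.mp h₂.2.1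
  rw [← walkCost_append_cons]
  exact gdist_le (isWalk_append_cons_iff.mpr ⟨h₁, h₂⟩)

theorem rtdist_triangle_left (u v x : V) :
    rtdist E W u v ≤ rtdist E W x u + rtdist E W x v :=
  calc gdist E W u v + gdist E W v u
      ≤ (gdist E W u x + gdist E W x v) + (gdist E W v x + gdist E W x u) :=
        add_le_add (gdist_triangle u x v) (gdist_triangle v x u)
    _ = rtdist E W x u + rtdist E W x v := by unfold rtdist; ring

-- A walk with the fewest vertices is simple: a repeated vertex could be cut out.
theorem exists_nodup_isWalk {l : List V} (hl : IsWalk E u v l) :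
    ∃ l, IsWalk E u v l ∧ l.Nodup := by
  classical
  have hex : ∃ n, ∃ l, IsWalk E u v l ∧ l.length = n := ⟨_, l, hl, rfl⟩
  obtain ⟨l, hl, hlen⟩ := Nat.find_spec hex
  refine ⟨l, hl, by_contra fun hnd => ?_⟩
  obtain ⟨a, ha⟩ := List.exists_duplicate_iff_not_nodup.mpr hnd
  obtain ⟨s, m, r, rfl⟩ := ha.exists_eq_append
  obtain ⟨hs, hr⟩ := isWalk_append_cons_iff.mp hl
  rw [← List.cons_append] at hr
  have hshort := Nat.find_min' hex
    ⟨_, isWalk_append_cons_iff.mpr ⟨hs, (isWalk_append_cons_iff.mp hr).2⟩, rfl⟩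
  simp only [← hlen, List.length_append, List.length_cons] at hshort
  omega

theorem one_le_gdist (hW : ∀ e ∈ E, 1 ≤ W e) (huv : u ≠ v) : 1 ≤ gdist E W u v := by
  refine le_iInf₂ fun l ⟨hc, hu, hv⟩ => ?_
  match l with
  | [] => simp at hu
  | [_] =>
    simp only [List.head?_cons, List.getLast?_singleton, Option.some.injEq] at hu hv
    exact absurd (hu.symm.trans hv) huv
  | a :: b :: l =>
    calc (1 : ℝ≥0∞) = ENNReal.ofReal 1 := ENNReal.ofReal_one.symm
      _ ≤ ENNReal.ofReal (W (a, b)) :=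
        ENNReal.ofReal_le_ofReal (hW _ (List.isChain_cons_cons.mp hc).1)
      _ ≤ walkCost W (a :: b :: l) := le_self_add

theorem two_le_rtdist (hW : ∀ e ∈ E, 1 ≤ W e) (huv : u ≠ v) : 2 ≤ rtdist E W u v :=
  calc (2 : ℝ≥0∞) = 1 + 1 := one_add_one_eq_two.symm
    _ ≤ rtdist E W u v := add_le_add (one_le_gdist hW huv) (one_le_gdist hW huv.symm)

theorem walkCost_le_mul {w : ℝ} (hw : ∀ e ∈ E, W e ≤ w) :
    ∀ {l : List V}, l.IsChain (fun a b => (a, b) ∈ E) →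
      walkCost W l ≤ (l.length - 1 : ℕ) * ENNReal.ofReal w
  | [], _ => by simp [walkCost]
  | [_], _ => by simp [walkCost]
  | a :: b :: l, hc => by
    have hab := List.isChain_cons_cons.mp hc
    calc walkCost W (a :: b :: l) = ENNReal.ofReal (W (a, b)) + walkCost W (b :: l) := rfl
      _ ≤ ENNReal.ofReal w + l.length * ENNReal.ofReal w :=
        add_le_add (ENNReal.ofReal_le_ofReal (hw _ hab.1)) (by simpa using walkCost_le_mul hw hab.2)
      _ = _ := by
        simp only [List.length_cons, add_tsub_cancel_right, Nat.cast_add, Nat.cast_one]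
        ring

theorem gdist_le_of_ne_top [Fintype V] {w : ℝ} (hw : ∀ e ∈ E, W e ≤ w)
    (h : gdist E W u v ≠ ⊤) :
    gdist E W u v ≤ (Fintype.card V - 1 : ℕ) * ENNReal.ofReal w := by
  obtain ⟨l, hl⟩ : ∃ l, IsWalk E u v l := by
    by_contra! hno
    exact h (by simp [gdist, hno])
  obtain ⟨l, hl, hnd⟩ := exists_nodup_isWalk hl
  calc gdist E W u v ≤ walkCost W l := gdist_le hl
    _ ≤ (l.length - 1 : ℕ) * ENNReal.ofReal w := walkCost_le_mul hw hl.1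
    _ ≤ _ := by gcongr; exact hnd.length_le_card

theorem rtdist_le_of_ne_top [Fintype V] {w : ℝ} (hw : ∀ e ∈ E, W e ≤ w)
    (h : rtdist E W u v ≠ ⊤) :
    rtdist E W u v ≤ ENNReal.ofReal (2 * Fintype.card V * w) := by
  obtain ⟨h₁, h₂⟩ : gdist E W u v ≠ ⊤ ∧ gdist E W v u ≠ ⊤ := by
    simpa [rtdist] using h
  calc rtdist E W u v
      ≤ (Fintype.card V - 1 : ℕ) * ENNReal.ofReal w +
          (Fintype.card V - 1 : ℕ) * ENNReal.ofReal w :=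
        add_le_add (gdist_le_of_ne_top hw h₁) (gdist_le_of_ne_top hw h₂)
    _ ≤ 2 * Fintype.card V * ENNReal.ofReal w := by
        rw [← two_mul, mul_assoc]
        gcongr
        exact Nat.sub_le _ _
    _ = ENNReal.ofReal (2 * Fintype.card V * w) := by
        rw [ENNReal.ofReal_mul (by positivity), ENNReal.ofReal_mul zero_le_two]; simp

end Walks

theorem exists_le_two_pow_le_two_mul {t M : ℝ} {L : ℕ} (hL : (L : ℤ) = ⌈Real.logb 2 M⌉)
    (ht : 1 < t) (htM : t ≤ M) : ∃ i ∈ Finset.Icc 1 L, t ≤ 2 ^ i ∧ 2 ^ i ≤ 2 * t := by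
  have hlog : 0 < Real.logb 2 t := Real.logb_pos one_lt_two ht
  obtain ⟨i, hi⟩ : ∃ i : ℕ, (i : ℤ) = ⌈Real.logb 2 t⌉ :=
    ⟨_, Int.toNat_of_nonneg (Int.ceil_nonneg hlog.le)⟩
  have hi' : (i : ℝ) = ⌈Real.logb 2 t⌉ := by exact_mod_cast hi
  refine ⟨i, Finset.mem_Icc.mpr ⟨?_, ?_⟩, ?_, ?_⟩
  · have := Int.ceil_pos.mpr hlog
    omega
  · have := Int.ceil_mono (Real.logb_le_logb_of_le one_lt_two (by linarith) htM)
    omega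
  · rw [← Real.rpow_natCast, ← Real.logb_le_iff_le_rpow one_lt_two (by linarith), hi']
    exact Int.le_ceil _
  · have : (i : ℝ) - 1 < Real.logb 2 t := by
      rw [hi']
      linarith [Int.ceil_lt_add_one (Real.logb 2 t)]
    rw [Real.lt_logb_iff_rpow_lt one_lt_two (by linarith), Real.rpow_sub two_pos,
      Real.rpow_natCast, Real.rpow_one] at this
    linarith [(div_lt_iff₀ two_pos).mp this]

section Spanner

variable {V : Type*} {E F : Set (V × V)} {W : V × V → ℝ} {u v : V}

theorem rtdist_le_two_mul_of_mem_ball {B : Set V} {x : V} {r : ℝ≥0∞}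
    (hF : ∀ y ∈ B, gdist F W x y ≤ inducedGdist E W B x y ∧
      gdist F W y x ≤ inducedGdist E W B y x)
    (hx : ∀ y ∈ B, inducedRtdist E W B x y ≤ r) (hu : u ∈ B) (hv : v ∈ B) :
    rtdist F W u v ≤ 2 * r := by
  have hFx : ∀ y ∈ B, rtdist F W x y ≤ r := fun y hy =>
    (add_le_add (hF y hy).1 (hF y hy).2).trans (hx y hy)
  calc rtdist F W u v ≤ rtdist F W x u + rtdist F W x v := rtdist_triangle_left u v x
    _ ≤ r + r := add_le_add (hFx u hu) (hFx v hv)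
    _ = 2 * r := (two_mul r).symm

theorem rtdist_le_four_mul_of_cover [Fintype V] {w β : ℝ} {L : ℕ}
    {𝒞 : ℕ → Finset (Finset V)} {x : Finset V → V}
    (hW1 : ∀ e ∈ E, 1 ≤ W e) (hWw : ∀ e ∈ E, W e ≤ w) (hβ : 0 < β)
    (hL : (L : ℤ) = ⌈Real.logb 2 (2 * (Fintype.card V : ℝ) * w)⌉)
    (hcenter : ∀ i ∈ Finset.Icc 1 L, ∀ B ∈ 𝒞 i,
      ∀ y ∈ B, inducedRtdist E W (↑B) (x B) y ≤ ENNReal.ofReal (β * 2 ^ i))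
    (hcover : ∀ i ∈ Finset.Icc 1 L,
      rtdist E W u v ≤ ENNReal.ofReal (2 ^ i) → ∃ B ∈ 𝒞 i, u ∈ B ∧ v ∈ B)
    (hF : ∀ i ∈ Finset.Icc 1 L, ∀ B ∈ 𝒞 i, ∀ y ∈ B,
      gdist F W (x B) y ≤ inducedGdist E W (↑B) (x B) y ∧
      gdist F W y (x B) ≤ inducedGdist E W (↑B) y (x B)) :
    rtdist F W u v ≤ ENNReal.ofReal (4 * β) * rtdist E W u v := by
  obtain rfl | huv := eq_or_ne u v
  · simp [rtdist, gdist_self]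
  obtain htop | hfin := eq_or_ne (rtdist E W u v) ⊤
  · rw [htop, ENNReal.mul_top (by simpa using hβ)]
    exact le_top
  set t := (rtdist E W u v).toReal
  have ht : ENNReal.ofReal t = rtdist E W u v := ENNReal.ofReal_toReal hfin
  have ht1 : 1 < t :=
    ENNReal.one_lt_ofReal.mp <| ht ▸ ENNReal.one_lt_two.trans_le (two_le_rtdist hW1 huv)
  have htM : t ≤ 2 * Fintype.card V * w :=
    ((ENNReal.ofReal_le_ofReal_iff').mp (ht ▸ rtdist_le_of_ne_top hWw hfin)).resolve_right
      (by linarith)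
  obtain ⟨i, hi, hti, hit⟩ := exists_le_two_pow_le_two_mul hL ht1 htM
  obtain ⟨B, hB, huB, hvB⟩ := hcover i hi (ht ▸ ENNReal.ofReal_le_ofReal hti)
  calc rtdist F W u v ≤ 2 * ENNReal.ofReal (β * 2 ^ i) :=
        rtdist_le_two_mul_of_mem_ball (hF i hi B hB) (hcenter i hi B hB) huB hvB
    _ = ENNReal.ofReal (2 * (β * 2 ^ i)) := by
        rw [ENNReal.ofReal_mul zero_le_two, ENNReal.ofReal_ofNat]
    _ ≤ ENNReal.ofReal (4 * β * t) := ENNReal.ofReal_le_ofReal (by nlinarith)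
    _ = ENNReal.ofReal (4 * β) * rtdist E W u v := by
        rw [ENNReal.ofReal_mul (by positivity), ht]

end Spanner

section TreeSize

variable {V : Type*} [DecidableEq V] {E T : Finset (V × V)} {W : V × V → ℝ} {B : Finset V}
  {x : V}

theorem IsSPOutTree.card_le (h : IsSPOutTree E W B x T) : T.card ≤ B.card := by
  simpa using Finset.card_le_mul_card_image_of_maps_to
    (fun e he => (Finset.mem_filter.mp (h.1 he)).2.2) 1 fun v _ => h.2.1 v

theorem IsSPInTree.card_le (h : IsSPInTree E W B x T) : T.card ≤ B.card := by
  simpa using Finset.card_le_mul_card_image_of_maps_to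
    (fun e he => (Finset.mem_filter.mp (h.1 he)).2.1) 1 fun v _ => h.2.1 v

theorem card_biUnion_spTrees_le [Fintype V] {𝒞 : Finset (Finset V)} {x : Finset V → V}
    {outT inT : Finset V → Finset (V × V)} {μ : ℕ}
    (htree : ∀ B ∈ 𝒞, IsSPOutTree E W B (x B) (outT B) ∧ IsSPInTree E W B (x B) (inT B))
    (hμ : ∀ v : V, (𝒞.filter (fun B => v ∈ B)).card ≤ μ) :
    (𝒞.biUnion fun B => outT B ∪ inT B).card ≤ 2 * μ * Fintype.card V :=
  calc (𝒞.biUnion fun B => outT B ∪ inT B).card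
      ≤ ∑ B ∈ 𝒞, (outT B ∪ inT B).card := Finset.card_biUnion_le
    _ ≤ ∑ B ∈ 𝒞, 2 * B.card := Finset.sum_le_sum fun B hB =>
        (Finset.card_union_le _ _).trans <| two_mul B.card ▸
          add_le_add (htree B hB).1.card_le (htree B hB).2.card_le
    _ = 2 * ∑ B ∈ 𝒞, B.card := (Finset.mul_sum _ _ _).symm
    _ ≤ 2 * (Fintype.card V * μ) := Nat.mul_le_mul_left 2 (Finset.sum_card_le hμ)
    _ = 2 * μ * Fintype.card V := by ring

end TreeSize

theorem cover_union_is_sourcewise_spanner_general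
    {V : Type} [Fintype V] [DecidableEq V]
    (E : Finset (V × V)) (W : V × V → ℝ) (w : ℝ)
    (hW : ∀ e ∈ E, 1 ≤ W e ∧ W e ≤ w)
    (S : Finset V) (β : ℝ) (hβ : 1 ≤ β)
    (L : ℕ) (hL : (L : ℤ) = ⌈Real.logb 2 (2 * (Fintype.card V : ℝ) * w)⌉)
    (𝒞 : ℕ → Finset (Finset V)) (x : Finset V → V)
    (hcenter : ∀ i ∈ Finset.Icc 1 L, ∀ B ∈ 𝒞 i, x B ∈ B ∧
      ∀ y ∈ B, inducedRtdist (↑E) W (↑B) (x B) y ≤ ENNReal.ofReal (β * 2 ^ i))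
    (hcover : ∀ i ∈ Finset.Icc 1 L, ∀ u ∈ S, ∀ v : V,
      rtdist (↑E) W u v ≤ ENNReal.ofReal (2 ^ i) → ∃ B ∈ 𝒞 i, u ∈ B ∧ v ∈ B) :
    -- Any subgraph realizing the ball distances is a sourcewise 4β-spanner.
    (∀ F : Finset (V × V), F ⊆ E →
      (∀ i ∈ Finset.Icc 1 L, ∀ B ∈ 𝒞 i, ∀ y ∈ B,
        gdist (↑F) W (x B) y ≤ inducedGdist (↑E) W (↑B) (x B) y ∧
        gdist (↑F) W y (x B) ≤ inducedGdist (↑E) W (↑B) y (x B)) →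
      ∀ u ∈ S, ∀ v : V,
        rtdist (↑F) W u v ≤ ENNReal.ofReal (4 * β) * rtdist (↑E) W u v) ∧
    -- The union of the round-trip trees of the balls has ≤ 2 μ n L edges.
    (∀ (outT inT : ℕ → Finset V → Finset (V × V)) (μ : ℕ),
      (∀ i ∈ Finset.Icc 1 L, ∀ B ∈ 𝒞 i,
        IsSPOutTree E W B (x B) (outT i B) ∧ IsSPInTree E W B (x B) (inT i B)) →
      (∀ v : V, ∀ i ∈ Finset.Icc 1 L,
        ((𝒞 i).filter (fun B => v ∈ B)).card ≤ μ) →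
      ((Finset.Icc 1 L).biUnion
          (fun i => (𝒞 i).biUnion (fun B => outT i B ∪ inT i B))).card ≤
        2 * μ * Fintype.card V * L) := by
  refine ⟨fun F _ hF u hu v => ?_, fun outT inT μ htree hμ => ?_⟩
  · exact rtdist_le_four_mul_of_cover (fun e he => (hW e he).1) (fun e he => (hW e he).2)
      (by linarith) hL (fun i hi B hB => (hcenter i hi B hB).2)
      (fun i hi => hcover i hi u hu v) hF
  · calc _ ≤ (Finset.Icc 1 L).card * (2 * μ * Fintype.card V) :=
          Finset.card_biUnion_le_card_mul _ _ _ fun i hi =>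
            card_biUnion_spTrees_le (htree i hi) fun v => hμ v i hi
      _ = 2 * μ * Fintype.card V * L := by simp [mul_comm]

/-- **From round-trip covers to a round-trip spanner.**
Given, for each scale `i = 1, …, L = ⌈log₂ (2 n w)⌉`, an `S`-sourcewise
`(β, 2^i)`-cover `𝒞 i` of `G` with centers `x B`, any subgraph `H = (V, F, W)`
realizing the induced center-to-vertex and vertex-to-center distances of every
ball is an `S`-sourcewise `4β`-roundtrip spanner of `G`.  Moreover, the union
of round-trip (out- and in-) shortest-path trees of all balls has at most
`2 * μ * n * L` edges whenever every vertex lies in at most `μ` balls of each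
cover. -/
theorem cover_union_is_sourcewise_spanner
    {V : Type} [Fintype V] [DecidableEq V]
    (E : Finset (V × V)) (W : V × V → ℝ) (w : ℝ)
    (hW : ∀ e ∈ E, 1 ≤ W e ∧ W e ≤ w)
    (hn : 2 ≤ Fintype.card V)
    (S : Finset V) (β : ℝ) (hβ : 1 ≤ β)
    (L : ℕ) (hL : (L : ℤ) = ⌈Real.logb 2 (2 * (Fintype.card V : ℝ) * w)⌉)
    (𝒞 : ℕ → Finset (Finset V)) (x : Finset V → V)
    (hcenter : ∀ i ∈ Finset.Icc 1 L, ∀ B ∈ 𝒞 i, x B ∈ B ∧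
      ∀ y ∈ B, inducedRtdist (↑E) W (↑B) (x B) y ≤ ENNReal.ofReal (β * 2 ^ i))
    (hcover : ∀ i ∈ Finset.Icc 1 L, ∀ u ∈ S, ∀ v : V,
      rtdist (↑E) W u v ≤ ENNReal.ofReal (2 ^ i) → ∃ B ∈ 𝒞 i, u ∈ B ∧ v ∈ B) :
    -- Any subgraph realizing the ball distances is a sourcewise 4β-spanner.
    (∀ F : Finset (V × V), F ⊆ E →
      (∀ i ∈ Finset.Icc 1 L, ∀ B ∈ 𝒞 i, ∀ y ∈ B,
        gdist (↑F) W (x B) y ≤ inducedGdist (↑E) W (↑B) (x B) y ∧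
        gdist (↑F) W y (x B) ≤ inducedGdist (↑E) W (↑B) y (x B)) →
      ∀ u ∈ S, ∀ v : V,
        rtdist (↑F) W u v ≤ ENNReal.ofReal (4 * β) * rtdist (↑E) W u v) ∧
    -- The union of the round-trip trees of the balls has ≤ 2 μ n L edges.
    (∀ (outT inT : ℕ → Finset V → Finset (V × V)) (μ : ℕ),
      (∀ i ∈ Finset.Icc 1 L, ∀ B ∈ 𝒞 i,
        IsSPOutTree E W B (x B) (outT i B) ∧ IsSPInTree E W B (x B) (inT i B)) →
      (∀ v : V, ∀ i ∈ Finset.Icc 1 L,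
        ((𝒞 i).filter (fun B => v ∈ B)).card ≤ μ) →
      ((Finset.Icc 1 L).biUnion
          (fun i => (𝒞 i).biUnion (fun B => outT i B ∪ inT i B))).card ≤
        2 * μ * Fintype.card V * L) :=
  cover_union_is_sourcewise_spanner_general E W w hW S β hβ L hL 𝒞 x hcenter hcover
end
end
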